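/- Let S be a smooth surface with co-normal immersion ν: S → ℝ³, and let ξ be the affine normal of S. The Euclidean unit normal of the co-normal surface S^ν satisfies N_ν = λξ for a nonvanishing smooth function λ, and consequently the second fundamental form coefficients of S^ν are e_ν = λl, f_ν = λm, g_ν = λn, where l, m, n are the coefficients of the affine third fundamental form of S. Hence a curve γ in the parameter domain gives an affine asymptotic line α∘γ of S if and only if ν∘γ is a Euclidean asymptotic line of S^ν. -/
import Mathlib

noncomputable section

open Matrix

/-- Partial derivative in the first variable. -/
def pd1 (f : ℝ → ℝ → ℝ) (u v : ℝ) : ℝ := deriv (fun t => f t v) u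

/-- Partial derivative in the second variable. -/
def pd2 (f : ℝ → ℝ → ℝ) (u v : ℝ) : ℝ := deriv (fun t => f u t) v

/-- Componentwise partial derivative in the first variable of an `ℝ³`-valued map. -/
def vpd1 (f : ℝ → ℝ → Fin 3 → ℝ) (u v : ℝ) : Fin 3 → ℝ :=
  fun i => pd1 (fun a b => f a b i) u v

/-- Componentwise partial derivative in the second variable of an `ℝ³`-valued map. -/
def vpd2 (f : ℝ → ℝ → Fin 3 → ℝ) (u v : ℝ) : Fin 3 → ℝ :=
  fun i => pd2 (fun a b => f a b i) u v

/-- Euclidean norm on `Fin 3 → ℝ`. -/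
def norm3 (w : Fin 3 → ℝ) : ℝ := Real.sqrt (w ⬝ᵥ w)

/-- Euclidean unit normal of the co-normal surface `ν`. -/
def unitNormal (ν : ℝ → ℝ → Fin 3 → ℝ) (u v : ℝ) : Fin 3 → ℝ :=
  (norm3 (crossProduct (vpd1 ν u v) (vpd2 ν u v)))⁻¹ •
    crossProduct (vpd1 ν u v) (vpd2 ν u v)

/-- A nonzero vector in `ℝ³` has positive self inner product. -/
lemma dotProduct_self_pos_of_ne_zero (C : Fin 3 → ℝ) (hC : C ≠ 0) :
    0 < C ⬝ᵥ C := by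
  have hne : C 0 ≠ 0 ∨ C 1 ≠ 0 ∨ C 2 ≠ 0 := by
    by_contra h
    push_neg at h
    exact hC (by funext i; fin_cases i <;> simp [h.1, h.2.1, h.2.2])
  simp only [dotProduct, Fin.sum_univ_three]
  rcases hne with h | h | h <;>
    nlinarith [mul_self_pos.mpr h, mul_self_nonneg (C 0), mul_self_nonneg (C 1),
      mul_self_nonneg (C 2)]

/-- A vector orthogonal to two vectors with nonvanishing cross product is a
nonzero multiple of the cross product (provided it is nonzero). -/
lemma parallel_aux (a b x : Fin 3 → ℝ)
    (ha : x ⬝ᵥ a = 0) (hb : x ⬝ᵥ b = 0)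
    (hC : crossProduct a b ≠ 0) (hx : x ≠ 0) :
    ∃ μ : ℝ, μ ≠ 0 ∧ x = μ • crossProduct a b := by
  set C : Fin 3 → ℝ := crossProduct a b with hCdef
  have hcc : C ⬝ᵥ C ≠ 0 := ne_of_gt (dotProduct_self_pos_of_ne_zero C hC)
  have ha' : x 0 * a 0 + x 1 * a 1 + x 2 * a 2 = 0 := by
    simpa [dotProduct, Fin.sum_univ_three] using ha
  have hb' : x 0 * b 0 + x 1 * b 1 + x 2 * b 2 = 0 := by
    simpa [dotProduct, Fin.sum_univ_three] using hb
  have hC0 : C 0 = a 1 * b 2 - a 2 * b 1 := by rw [hCdef, cross_apply]; rfl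
  have hC1 : C 1 = a 2 * b 0 - a 0 * b 2 := by rw [hCdef, cross_apply]; rfl
  have hC2 : C 2 = a 0 * b 1 - a 1 * b 0 := by rw [hCdef, cross_apply]; rfl
  have h01 : x 0 * C 1 = x 1 * C 0 := by
    rw [hC0, hC1]; linear_combination a 2 * hb' - b 2 * ha'
  have h02 : x 0 * C 2 = x 2 * C 0 := by
    rw [hC0, hC2]; linear_combination b 1 * ha' - a 1 * hb'
  have h12 : x 1 * C 2 = x 2 * C 1 := by
    rw [hC1, hC2]; linear_combination a 0 * hb' - b 0 * ha'
  have key : x = ((x ⬝ᵥ C) / (C ⬝ᵥ C)) • C := by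
    funext i
    have hgen : ∀ j : Fin 3, x j * (C ⬝ᵥ C) = (x ⬝ᵥ C) * C j := by
      intro j
      fin_cases j
      · show x 0 * (C ⬝ᵥ C) = (x ⬝ᵥ C) * C 0
        simp only [dotProduct, Fin.sum_univ_three]
        linear_combination C 1 * h01 + C 2 * h02
      · show x 1 * (C ⬝ᵥ C) = (x ⬝ᵥ C) * C 1
        simp only [dotProduct, Fin.sum_univ_three]
        linear_combination (-C 0) * h01 + C 2 * h12
      · show x 2 * (C ⬝ᵥ C) = (x ⬝ᵥ C) * C 2
        simp only [dotProduct, Fin.sum_univ_three]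
        linear_combination (-C 0) * h02 + (-C 1) * h12
    have : x i = (x ⬝ᵥ C) / (C ⬝ᵥ C) * C i := by
      rw [div_mul_eq_mul_div, eq_div_iff hcc]
      exact hgen i
    simpa using this
  refine ⟨(x ⬝ᵥ C) / (C ⬝ᵥ C), ?_, key⟩
  intro h
  rw [h, zero_smul] at key
  exact hx key

/-- If `ν` is the co-normal immersion of `S` and `ξ` its affine normal
(`⟨ν,ξ⟩ = 1`, `⟨ξ,ν_u⟩ = ⟨ξ,ν_v⟩ = 0`, `ν_u ∧ ν_v ≠ 0`), then the unit normal of the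
co-normal surface is `N_ν = λξ` with `λ` nonvanishing, the second fundamental form
coefficients of `S^ν` are `e_ν = λl`, `f_ν = λm`, `g_ν = λn` where
`l = ⟨ξ,ν_uu⟩, m = ⟨ξ,ν_uv⟩, n = ⟨ξ,ν_vv⟩` are the affine third fundamental form
coefficients of `S`; hence a curve `γ` gives an affine asymptotic line of `S` iff
`ν ∘ γ` is a Euclidean asymptotic line of `S^ν`. -/
theorem conormal_surface_asymptotic_correspondence
    (ν ξ : ℝ → ℝ → Fin 3 → ℝ)
    (hν : ContDiff ℝ (⊤ : ℕ∞) (fun p : ℝ × ℝ => ν p.1 p.2))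
    (hξ : ContDiff ℝ (⊤ : ℕ∞) (fun p : ℝ × ℝ => ξ p.1 p.2))
    (h1 : ∀ u v, ν u v ⬝ᵥ ξ u v = 1)
    (h2 : ∀ u v, ξ u v ⬝ᵥ vpd1 ν u v = 0)
    (h3 : ∀ u v, ξ u v ⬝ᵥ vpd2 ν u v = 0)
    (himm : ∀ u v, crossProduct (vpd1 ν u v) (vpd2 ν u v) ≠ 0) :
    ∃ lam : ℝ → ℝ → ℝ,
      (∀ u v, lam u v ≠ 0) ∧
      (∀ u v, unitNormal ν u v = lam u v • ξ u v) ∧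
      (∀ u v, unitNormal ν u v ⬝ᵥ vpd1 (vpd1 ν) u v
          = lam u v * (ξ u v ⬝ᵥ vpd1 (vpd1 ν) u v) ∧
        unitNormal ν u v ⬝ᵥ vpd2 (vpd1 ν) u v
          = lam u v * (ξ u v ⬝ᵥ vpd2 (vpd1 ν) u v) ∧
        unitNormal ν u v ⬝ᵥ vpd2 (vpd2 ν) u v
          = lam u v * (ξ u v ⬝ᵥ vpd2 (vpd2 ν) u v)) ∧
      (∀ γ : ℝ → ℝ × ℝ, ContDiff ℝ (⊤ : ℕ∞) γ →
        ((∀ t : ℝ,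
            (ξ (γ t).1 (γ t).2 ⬝ᵥ vpd1 (vpd1 ν) (γ t).1 (γ t).2)
                * (deriv (fun s => (γ s).1) t) ^ 2
              + 2 * (ξ (γ t).1 (γ t).2 ⬝ᵥ vpd2 (vpd1 ν) (γ t).1 (γ t).2)
                * deriv (fun s => (γ s).1) t * deriv (fun s => (γ s).2) t
              + (ξ (γ t).1 (γ t).2 ⬝ᵥ vpd2 (vpd2 ν) (γ t).1 (γ t).2)
                * (deriv (fun s => (γ s).2) t) ^ 2 = 0) ↔
          (∀ t : ℝ,
            (unitNormal ν (γ t).1 (γ t).2 ⬝ᵥ vpd1 (vpd1 ν) (γ t).1 (γ t).2)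
                * (deriv (fun s => (γ s).1) t) ^ 2
              + 2 * (unitNormal ν (γ t).1 (γ t).2 ⬝ᵥ vpd2 (vpd1 ν) (γ t).1 (γ t).2)
                * deriv (fun s => (γ s).1) t * deriv (fun s => (γ s).2) t
              + (unitNormal ν (γ t).1 (γ t).2 ⬝ᵥ vpd2 (vpd2 ν) (γ t).1 (γ t).2)
                * (deriv (fun s => (γ s).2) t) ^ 2 = 0))) := by
  -- the scalar λ is recovered as ⟨ν, N_ν⟩ since ⟨ν, ξ⟩ = 1
  set lam : ℝ → ℝ → ℝ := fun u v => ν u v ⬝ᵥ unitNormal ν u v with hlamdef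
  have main : ∀ u v, unitNormal ν u v = lam u v • ξ u v ∧ lam u v ≠ 0 := by
    intro u v
    set a := vpd1 ν u v
    set b := vpd2 ν u v
    set C : Fin 3 → ℝ := crossProduct a b with hCdef
    have hCne : C ≠ 0 := himm u v
    have hxne : ξ u v ≠ 0 := by
      intro h
      have := h1 u v
      rw [h] at this
      simp [dotProduct] at this
    obtain ⟨μ, hμ, hxC⟩ := parallel_aux a b (ξ u v) (h2 u v) (h3 u v) hCne hxne
    have hnorm : norm3 C ≠ 0 := by
      have := dotProduct_self_pos_of_ne_zero C hCne
      simp only [norm3]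
      positivity
    have hCx : C = μ⁻¹ • ξ u v := by
      rw [hxC, smul_smul, inv_mul_cancel₀ hμ, one_smul]
    have hNx : unitNormal ν u v = ((norm3 C)⁻¹ * μ⁻¹) • ξ u v := by
      rw [unitNormal]
      show (norm3 C)⁻¹ • C = _
      rw [hCx, smul_smul]
    have hlamval : lam u v = (norm3 C)⁻¹ * μ⁻¹ := by
      rw [hlamdef]
      show ν u v ⬝ᵥ unitNormal ν u v = _
      rw [hNx, dotProduct_smul, h1 u v, smul_eq_mul, mul_one]
    constructor
    · rw [hlamval]; exact hNx
    · rw [hlamval]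
      exact mul_ne_zero (inv_ne_zero hnorm) (inv_ne_zero hμ)
  refine ⟨lam, fun u v => (main u v).2, fun u v => (main u v).1, ?_, ?_⟩
  · intro u v
    rw [(main u v).1]
    exact ⟨smul_dotProduct _ _ _, smul_dotProduct _ _ _, smul_dotProduct _ _ _⟩
  · intro γ _
    constructor
    · intro h t
      rw [(main (γ t).1 (γ t).2).1]
      rw [smul_dotProduct, smul_dotProduct, smul_dotProduct]
      simp only [smul_eq_mul]
      linear_combination lam (γ t).1 (γ t).2 * h t
    · intro h t
      have ht := h t
      rw [(main (γ t).1 (γ t).2).1] at ht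
      rw [smul_dotProduct, smul_dotProduct, smul_dotProduct] at ht
      simp only [smul_eq_mul] at ht
      have hL := (main (γ t).1 (γ t).2).2
      have : lam (γ t).1 (γ t).2 *
          ((ξ (γ t).1 (γ t).2 ⬝ᵥ vpd1 (vpd1 ν) (γ t).1 (γ t).2)
              * (deriv (fun s => (γ s).1) t) ^ 2
            + 2 * (ξ (γ t).1 (γ t).2 ⬝ᵥ vpd2 (vpd1 ν) (γ t).1 (γ t).2)
              * deriv (fun s => (γ s).1) t * deriv (fun s => (γ s).2) t
            + (ξ (γ t).1 (γ t).2 ⬝ᵥ vpd2 (vpd2 ν) (γ t).1 (γ t).2)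
              * (deriv (fun s => (γ s).2) t) ^ 2) = 0 := by
        linear_combination ht
      exact (mul_eq_zero.1 this).resolve_left hL

end
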